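/- Let p be a prime, e ≥ 1, and A, B ∈ R = ℤ/p^eℤ. If X, Z ∈ R satisfy p ∣ X, p ∣ Z and Z = X³ + A·X·Z² + B·Z³, then Z ≡ X³ + A·X⁷ + B·X⁹ modulo p¹⁰, i.e. (p : R)¹⁰ divides Z − (X³ + A·X⁷ + B·X⁹) in R. -/
import Mathlib


/-- For a point at infinity `(X : 1 : Z)` of the Weierstrass curve over `ℤ/p^eℤ`, the
`Z`-coordinate satisfies `Z ≡ X³ + AX⁷ + BX⁹ (mod p¹⁰)`. -/
theorem infinity_Z_congruent_mod_p_ten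
    {p : ℕ} (hp : p.Prime) {e : ℕ} (he : 1 ≤ e)
    (A B X Z : ZMod (p ^ e))
    (hX : (p : ZMod (p ^ e)) ∣ X) (hZ : (p : ZMod (p ^ e)) ∣ Z)
    (heq : Z = X ^ 3 + A * X * Z ^ 2 + B * Z ^ 3) :
    (p : ZMod (p ^ e)) ^ 10 ∣ Z - (X ^ 3 + A * X ^ 7 + B * X ^ 9) := by
  obtain ⟨x, hx⟩ := hX
  obtain ⟨z, hz⟩ := hZ
  have h3Z : (p : ZMod (p ^ e)) ^ 3 ∣ Z :=
    ⟨x ^ 3 + A * x * z ^ 2 + B * z ^ 3, by rw [heq, hx, hz]; ring⟩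
  obtain ⟨w, hw⟩ := h3Z
  have h7 : (p : ZMod (p ^ e)) ^ 7 ∣ Z - X ^ 3 :=
    ⟨A * x * w ^ 2 + (p : ZMod (p ^ e)) ^ 2 * B * w ^ 3, by rw [heq, hw, hx]; ring⟩
  have h3sum : (p : ZMod (p ^ e)) ^ 3 ∣ Z + X ^ 3 := ⟨w + x ^ 3, by rw [hw, hx]; ring⟩
  have h3q : (p : ZMod (p ^ e)) ^ 3 ∣ Z ^ 2 + X ^ 3 * Z + X ^ 6 :=
    ⟨(p : ZMod (p ^ e)) ^ 3 * w ^ 2 + (p : ZMod (p ^ e)) ^ 3 * x ^ 3 * w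
      + (p : ZMod (p ^ e)) ^ 3 * x ^ 6, by rw [hw, hx]; ring⟩
  have key : Z - (X ^ 3 + A * X ^ 7 + B * X ^ 9)
      = (Z - X ^ 3) * (A * X * (Z + X ^ 3)) + (Z - X ^ 3) * (B * (Z ^ 2 + X ^ 3 * Z + X ^ 6)) := by
    linear_combination heq
  rw [show ((p : ZMod (p ^ e))) ^ 10 = (p : ZMod (p ^ e)) ^ 7 * (p : ZMod (p ^ e)) ^ 3 by ring,
    key]
  exact dvd_add (mul_dvd_mul h7 (h3sum.mul_left _)) (mul_dvd_mul h7 (h3q.mul_left _))
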